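/- arXiv:1006.1686 — 4 statements merged into one kernel-verified Lean document; each statement's English description precedes it below -/
import Mathlib

section
/- Let Ṽ : ℝ → ℝ be even and C¹ with Ṽ' convex on [0,∞) (e.g. Ṽ has nonnegative third derivatives for positive arguments). Then for all a < b, Ṽ'(b) − Ṽ'(a) ≥ 2 Ṽ'((b−a)/2); that is, Ṽ' is a modulus of convexity for Ṽ on ℝ. -/
open Set

lemma midpt {g : ℝ → ℝ} (hconv : ConvexOn ℝ (Set.Ici (0 : ℝ)) g)
    {x y : ℝ} (hx : 0 ≤ x) (hy : 0 ≤ y) :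
    g ((x + y) / 2) ≤ (g x + g y) / 2 := by
  have := hconv.2 (mem_Ici.2 hx) (mem_Ici.2 hy)
    (by norm_num : (0:ℝ) ≤ 1/2) (by norm_num : (0:ℝ) ≤ 1/2) (by norm_num)
  simp only [smul_eq_mul] at this
  have h1 : (1:ℝ)/2 * x + 1/2 * y = (x + y) / 2 := by ring
  rw [h1] at this
  linarith

lemma supadd {g : ℝ → ℝ} (hconv : ConvexOn ℝ (Set.Ici (0 : ℝ)) g)
    (hg0 : g 0 = 0) {x y : ℝ} (hx : 0 ≤ x) (hy : 0 ≤ y) :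
    g x + g y ≤ g (x + y) := by
  rcases eq_or_lt_of_le (by linarith : (0:ℝ) ≤ x + y) with hs | hs
  · have hx0 : x = 0 := by linarith
    have hy0 : y = 0 := by linarith
    simp [hx0, hy0, hg0]
  · have hsx : g x ≤ (x / (x + y)) * g (x + y) + (y / (x + y)) * g 0 := by
      have := hconv.2 (mem_Ici.2 (le_of_lt hs)) (mem_Ici.2 le_rfl)
        (div_nonneg hx (le_of_lt hs)) (div_nonneg hy (le_of_lt hs))
        (by field_simp)
      simp only [smul_eq_mul, mul_zero, add_zero] at this
      have h1 : x / (x + y) * (x + y) = x := by field_simp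
      rw [h1] at this
      simpa using this
    have hsy : g y ≤ (y / (x + y)) * g (x + y) + (x / (x + y)) * g 0 := by
      have := hconv.2 (mem_Ici.2 (le_of_lt hs)) (mem_Ici.2 le_rfl)
        (div_nonneg hy (le_of_lt hs)) (div_nonneg hx (le_of_lt hs))
        (by field_simp; ring)
      simp only [smul_eq_mul, mul_zero, add_zero] at this
      have h1 : y / (x + y) * (x + y) = y := by field_simp
      rw [h1] at this
      simpa using this
    have hsum : (x / (x + y)) + (y / (x + y)) = 1 := by field_simp
    rw [hg0] at hsx hsy
    have key : x / (x + y) * g (x + y) + y / (x + y) * g (x + y) = g (x + y) := by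
      rw [← add_mul, hsum, one_mul]
    linarith

/-- If `Ṽ : ℝ → ℝ` is even and C¹ with `Ṽ'` convex on `[0,∞)`, then
`Ṽ'(b) − Ṽ'(a) ≥ 2 Ṽ'((b−a)/2)` for all `a < b`; i.e. `Ṽ'` is a modulus of convexity
for `Ṽ` on `ℝ`. -/
theorem stmt_1 (Vt : ℝ → ℝ) (heven : ∀ x : ℝ, Vt (-x) = Vt x)
    (hC1 : ContDiff ℝ 1 Vt) (hconv : ConvexOn ℝ (Set.Ici (0 : ℝ)) (deriv Vt)) :
    ∀ a b : ℝ, a < b → deriv Vt b - deriv Vt a ≥ 2 * deriv Vt ((b - a) / 2) := by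
  set g := deriv Vt with hg
  have hodd : ∀ x : ℝ, g (-x) = -g x := by
    intro x
    have h1 : (fun y : ℝ => Vt (-y)) = Vt := funext heven
    have h2 : deriv (fun y : ℝ => Vt (-y)) x = -deriv Vt (-x) := deriv_comp_neg Vt x
    rw [h1] at h2
    have : g x = -g (-x) := h2
    linarith
  have hg0 : g 0 = 0 := by
    have := hodd 0
    simp at this
    linarith
  intro a b hab
  set h := (b - a) / 2 with hh
  have hhpos : 0 < h := by simp [hh]; linarith
  rcases le_or_gt 0 a with ha | ha
  · -- a ≥ 0 : b = a + 2h
    have hb : b = a + 2 * h := by simp [hh]; ring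
    have h1 : g a + g (2 * h) ≤ g (a + 2 * h) :=
      supadd hconv hg0 ha (by linarith)
    have h2 : g h + g h ≤ g (h + h) := supadd hconv hg0 hhpos.le hhpos.le
    have : h + h = 2 * h := by ring
    rw [this] at h2
    rw [hb]
    linarith
  · rcases le_or_gt b 0 with hb | hb
    · -- b ≤ 0 : reflect
      have hnb : (0:ℝ) ≤ -b := by linarith
      have heq : -a = -b + 2 * h := by simp [hh]; ring
      have h1 : g (-b) + g (2 * h) ≤ g (-b + 2 * h) :=
        supadd hconv hg0 hnb (by linarith)
      have h2 : g h + g h ≤ g (h + h) := supadd hconv hg0 hhpos.le hhpos.le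
      have h3 : h + h = 2 * h := by ring
      rw [h3] at h2
      rw [← heq] at h1
      have hoa := hodd a
      have hob := hodd b
      simp only [ge_iff_le]
      linarith
    · -- a < 0 < b : midpoint
      have hm : (b + -a) / 2 = h := by simp [hh]; ring
      have h1 : g ((b + -a) / 2) ≤ (g b + g (-a)) / 2 :=
        midpt hconv hb.le (by linarith)
      rw [hm] at h1
      have hoa := hodd a
      simp only [ge_iff_le]
      linarith
end

section
/- Let V(x) = Ṽ(|x|) + c·∑_{i=2}^n x_i² on ℝⁿ, where c ≥ 0 and Ṽ : ℝ → ℝ is even, C¹, with Ṽ' convex and nonnegative-third-derivative on (0,∞) (so that Ṽ'(b) − Ṽ'(a) ≥ 2Ṽ'((b−a)/2) for a < b). Then Ṽ' is a modulus of convexity for V: for all x ≠ y in ℝⁿ, (∇V(y) − ∇V(x)) · (y−x)/|y−x| ≥ 2Ṽ'(|y−x|/2). -/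
/-!
Write `f = Ṽ'` (odd, since `Ṽ` is even) and `r = ‖y - x‖`, `u = (y - x) / r`,
`p = ⟪x, u⟫`, `q = ⟪y, u⟫ = p + r`. The radial part of `V` contributes
`f ‖y‖ / ‖y‖ * q - f ‖x‖ / ‖x‖ * p`, where `t ↦ f t / t` is nondecreasing on `(0, ∞)` by convexity
of `f` and `f 0 = 0`, and `‖y‖² - ‖x‖² = q² - p²` because `x` and `y` have the same component
orthogonal to `u`. When `p` and `q` have the same sign this is at least `f r ≥ 2 f (r / 2)`; when
`p < 0 < q` it is at least `f q + f (-p) = f q - f p ≥ 2 f (r / 2)`. The quadratic part contributes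
`2c ∑_{i ≠ 0} (y_i - x_i)² / r ≥ 0`.
-/

open Set

section Scalar

variable {f : ℝ → ℝ}

theorem ConvexOn.monotoneOn_div_self_of_map_zero (hf : ConvexOn ℝ (Ici 0) f) (h0 : f 0 = 0) :
    MonotoneOn (fun t => f t / t) (Ioi 0) := by
  intro s hs t ht hst
  simpa [h0] using hf.secant_mono (mem_Ici.mpr le_rfl) (Ioi_subset_Ici_self hs)
    (Ioi_subset_Ici_self ht) (ne_of_gt hs) (ne_of_gt ht) hst

theorem map_le_div_self_mul_of_le (hmono : MonotoneOn (fun t => f t / t) (Ioi 0)) {t b : ℝ}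
    (ht : 0 < t) (htb : t ≤ b) : f t ≤ f b / b * t :=
  calc f t = f t / t * t := (div_mul_cancel₀ _ ht.ne').symm
    _ ≤ f b / b * t := mul_le_mul_of_nonneg_right (hmono ht (ht.trans_le htb) htb) ht.le

theorem two_mul_map_half_sub_le_of_nonneg (hmono : MonotoneOn (fun t => f t / t) (Ioi 0))
    (hmod : ∀ a b : ℝ, a < b → f b - f a ≥ 2 * f ((b - a) / 2))
    (h0 : f 0 = 0) {a b p q : ℝ} (hp : 0 ≤ p) (hpq : p < q)
    (hpa : p ≤ a) (hqb : q ≤ b) (hab : b ^ 2 - a ^ 2 = q ^ 2 - p ^ 2) :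
    2 * f ((q - p) / 2) ≤ f b / b * q - f a / a * p := by
  have hsub : 2 * f ((q - p) / 2) ≤ f (q - p) := by
    simpa [h0] using hmod 0 (q - p) (by linarith)
  have hq : f (q - p) ≤ f b / b * (q - p) :=
    map_le_div_self_mul_of_le hmono (by linarith) (by linarith)
  have hp : f a / a * p ≤ f b / b * p := by
    rcases hp.eq_or_lt with rfl | hp
    · simp
    have hba : a ≤ b := by nlinarith
    exact mul_le_mul_of_nonneg_right
      (hmono (hp.trans_le hpa) (hp.trans_le (hpa.trans hba)) hba) hp.le
  linarith [mul_sub (f b / b) q p]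

theorem two_mul_map_half_sub_le_of_neg_of_pos (hmono : MonotoneOn (fun t => f t / t) (Ioi 0))
    (hmod : ∀ a b : ℝ, a < b → f b - f a ≥ 2 * f ((b - a) / 2))
    (hodd : ∀ t, f (-t) = -f t) {a b p q : ℝ}
    (hp : p < 0) (hq : 0 < q) (hpa : -p ≤ a) (hqb : q ≤ b) :
    2 * f ((q - p) / 2) ≤ f b / b * q - f a / a * p := by
  have hfq := map_le_div_self_mul_of_le hmono hq hqb
  have hfp := map_le_div_self_mul_of_le hmono (neg_pos.mpr hp) hpa
  linarith [hmod p q (hp.trans hq), hodd p]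

theorem two_mul_map_half_sub_le (hmono : MonotoneOn (fun t => f t / t) (Ioi 0))
    (hmod : ∀ a b : ℝ, a < b → f b - f a ≥ 2 * f ((b - a) / 2))
    (hodd : ∀ t, f (-t) = -f t) {a b p q : ℝ} (hpq : p < q)
    (hpa : |p| ≤ a) (hqb : |q| ≤ b) (hab : b ^ 2 - a ^ 2 = q ^ 2 - p ^ 2) :
    2 * f ((q - p) / 2) ≤ f b / b * q - f a / a * p := by
  have h0 : f 0 = 0 := by linarith [neg_zero (G := ℝ) ▸ hodd 0]
  rw [abs_le] at hpa hqb
  rcases le_or_gt 0 p with hp | hp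
  · exact two_mul_map_half_sub_le_of_nonneg hmono hmod h0 hp hpq hpa.2 hqb.2 hab
  rcases le_or_gt q 0 with hq | hq
  · have := two_mul_map_half_sub_le_of_nonneg (a := b) (b := a) hmono hmod h0 (neg_nonneg.mpr hq)
      (neg_lt_neg hpq) (by linarith) (by linarith) (by linarith)
    rw [neg_sub_neg] at this
    linarith
  · exact two_mul_map_half_sub_le_of_neg_of_pos hmono hmod hodd hp hq (by linarith) hqb.2

end Scalar

theorem deriv_neg_of_even {φ : ℝ → ℝ} (heven : ∀ x, φ (-x) = φ x) (t : ℝ) :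
    deriv φ (-t) = -deriv φ t := by
  have h := deriv_comp_neg (f := φ) (x := -t)
  simp only [heven, neg_neg] at h
  linarith

section Radial

variable {F : Type*} [NormedAddCommGroup F] [InnerProductSpace ℝ F]

theorem norm_add_smul_sq_sub_inner_sq {u : F} (hu : ‖u‖ = 1) (x : F) (t : ℝ) :
    ‖x + t • u‖ ^ 2 - inner ℝ (x + t • u) u ^ 2 = ‖x‖ ^ 2 - inner ℝ x u ^ 2 := by
  have huu : inner ℝ u u = (1 : ℝ) := by rw [real_inner_self_eq_norm_sq, hu, one_pow]
  rw [norm_add_sq_real, inner_add_left, real_inner_smul_left, real_inner_smul_right, huu,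
    norm_smul, hu, Real.norm_eq_abs, mul_one, sq_abs]
  ring

theorem hasFDerivAt_norm {z : F} (hz : z ≠ 0) : HasFDerivAt (‖·‖) (‖z‖⁻¹ • innerSL ℝ z) z := by
  have h := (hasStrictFDerivAt_norm_sq z).hasFDerivAt.sqrt (by positivity)
  simp only [Real.sqrt_sq (norm_nonneg _)] at h
  convert h using 1
  ext v
  simp
  field_simp

theorem hasFDerivAt_comp_norm_zero {φ : ℝ → ℝ} (hφ : HasDerivAt φ 0 0) :
    HasFDerivAt (fun w : F => φ ‖w‖) (0 : F →L[ℝ] ℝ) 0 := by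
  rw [hasFDerivAt_iff_isLittleO_nhds_zero]
  have h := (hasDerivAt_iff_isLittleO_nhds_zero.mp hφ).comp_tendsto
    (continuous_norm.tendsto' (0 : F) 0 norm_zero)
  simpa [Function.comp_def] using
    h.trans_isBigO (Asymptotics.isBigO_refl (fun w : F => w) _).norm_left

theorem hasFDerivAt_comp_norm {φ : ℝ → ℝ} (hφ : Differentiable ℝ φ) (h0 : deriv φ 0 = 0) (z : F) :
    HasFDerivAt (fun w => φ ‖w‖) ((deriv φ ‖z‖ / ‖z‖) • innerSL ℝ z) z := by
  rcases eq_or_ne z 0 with rfl | hz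
  · have h := (hφ 0).hasDerivAt
    rw [h0] at h
    simpa using hasFDerivAt_comp_norm_zero h
  refine ((hφ ‖z‖).hasDerivAt.comp_hasFDerivAt z (hasFDerivAt_norm hz)).congr_fderiv ?_
  rw [div_eq_mul_inv, mul_smul]

end Radial

theorem EuclideanSpace.hasFDerivAt_sum_sq {ι : Type*} [Fintype ι] (s : Finset ι)
    (z : EuclideanSpace ℝ ι) :
    HasFDerivAt (fun w : EuclideanSpace ℝ ι => ∑ i ∈ s, w i ^ 2)
      (∑ i ∈ s, (2 * z i) • (EuclideanSpace.proj i : EuclideanSpace ℝ ι →L[ℝ] ℝ)) z := by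
  refine HasFDerivAt.fun_sum fun i _ => ?_
  have hproj := (EuclideanSpace.proj i : EuclideanSpace ℝ ι →L[ℝ] ℝ).hasFDerivAt (x := z)
  exact (hproj.pow 2).congr_fderiv (by simp)

/-- For `V(x) = Ṽ(|x|) + c·∑_{i=2}^n x_i²` on `ℝⁿ` (`n ≥ 1`), with
`c ≥ 0` and `Ṽ` even, C¹, with `Ṽ'` convex on `[0,∞)` (hence
`Ṽ'(b) − Ṽ'(a) ≥ 2Ṽ'((b−a)/2)` for `a < b`), `Ṽ'` is a modulus of convexity for `V`:
for all `x ≠ y`, `(∇V(y) − ∇V(x)) · (y−x)/|y−x| ≥ 2Ṽ'(|y−x|/2)`. -/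
theorem stmt_6 {n : ℕ} (c : ℝ) (hc : 0 ≤ c) (Vt : ℝ → ℝ)
    (heven : ∀ x : ℝ, Vt (-x) = Vt x) (hC1 : ContDiff ℝ 1 Vt)
    (hconv : ConvexOn ℝ (Set.Ici (0 : ℝ)) (deriv Vt))
    (hmod : ∀ a b : ℝ, a < b → deriv Vt b - deriv Vt a ≥ 2 * deriv Vt ((b - a) / 2))
    (V : EuclideanSpace ℝ (Fin (n + 1)) → ℝ)
    (hV : V = fun x => Vt ‖x‖ + c * ∑ i ∈ Finset.univ.erase (0 : Fin (n + 1)), x i ^ 2) :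
    ∀ x y : EuclideanSpace ℝ (Fin (n + 1)), x ≠ y →
      (inner ℝ (gradient V y - gradient V x) ((‖y - x‖)⁻¹ • (y - x)) : ℝ)
        ≥ 2 * deriv Vt (‖y - x‖ / 2) := by
  intro x y hxy
  have hodd : ∀ t, deriv Vt (-t) = -deriv Vt t := deriv_neg_of_even heven
  have h0 : deriv Vt 0 = 0 := by linarith [neg_zero (G := ℝ) ▸ hodd 0]
  set s := Finset.univ.erase (0 : Fin (n + 1))
  have hinner : ∀ z v, inner ℝ (gradient V z) v
      = deriv Vt ‖z‖ / ‖z‖ * inner ℝ z v + c * ∑ i ∈ s, 2 * z i * v i := by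
    intro z v
    have hd := (hasFDerivAt_comp_norm (hC1.differentiable one_ne_zero) h0 z).fun_add
      ((EuclideanSpace.hasFDerivAt_sum_sq s z).const_mul c)
    rw [inner_gradient_left, hV, hd.fderiv]
    simp
  set r := ‖y - x‖
  have hr : 0 < r := norm_pos_iff.mpr (sub_ne_zero.mpr hxy.symm)
  set u := r⁻¹ • (y - x)
  have hu : ‖u‖ = 1 := by
    rw [norm_smul, norm_inv, norm_norm, inv_mul_cancel₀ hr.ne']
  have hy : y = x + r • u := by simp [u, smul_smul, hr.ne']
  have hyu : inner ℝ y u = inner ℝ x u + r := by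
    rw [hy, inner_add_left, real_inner_smul_left, real_inner_self_eq_norm_sq, hu]
    ring
  have hkey := two_mul_map_half_sub_le (hconv.monotoneOn_div_self_of_map_zero h0) hmod hodd
    (a := ‖x‖) (b := ‖y‖) (p := inner ℝ x u) (q := inner ℝ y u) (by linarith)
    ((abs_real_inner_le_norm x u).trans (by rw [hu, mul_one]))
    ((abs_real_inner_le_norm y u).trans (by rw [hu, mul_one]))
    (by linarith [hy ▸ norm_add_smul_sq_sub_inner_sq hu x r])
  have hquad : ∑ i ∈ s, 2 * x i * u i ≤ ∑ i ∈ s, 2 * y i * u i :=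
    Finset.sum_le_sum fun i _ => by
      have hdiff : 2 * y i * u i - 2 * x i * u i = 2 * (r⁻¹ * (y i - x i) ^ 2) := by
        simp only [u, PiLp.smul_apply, PiLp.sub_apply, smul_eq_mul]
        ring
      linarith [show 0 ≤ 2 * (r⁻¹ * (y i - x i) ^ 2) by positivity]
  rw [hyu, add_sub_cancel_left] at hkey
  rw [inner_sub_left, hinner, hinner, hyu]
  linarith [mul_le_mul_of_nonneg_left hquad hc]
end

section
/- The double-well potential Ṽ(z) = −az² + bz⁴ with a, b > 0 satisfies Ṽ'(y) − Ṽ'(x) ≥ 2Ṽ'((y−x)/2) for all x < y; i.e. Ṽ' is a modulus of convexity for Ṽ. -/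
/-!
The linear part of `Ṽ'` drops out of `Ṽ'(y) − Ṽ'(x) − 2Ṽ'((y−x)/2)`, and what the cubic part
leaves is `3b (y − x)(x + y)²`, which is nonnegative for `x < y`.
-/

lemma deriv_neg_mul_sq_add_mul_pow_four (a b t : ℝ) :
    deriv (fun z => -a * z ^ 2 + b * z ^ 4) t = -2 * a * t + 4 * b * t ^ 3 := by
  have h : HasDerivAt (fun z : ℝ => -a * z ^ 2 + b * z ^ 4) (-2 * a * t + 4 * b * t ^ 3) t :=
    (((hasDerivAt_pow 2 t).const_mul (-a)).add ((hasDerivAt_pow 4 t).const_mul b)).congr_deriv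
      (by ring)
  exact h.deriv

lemma linear_add_cubic_sub_sub_two_mul_half (c d x y : ℝ) :
    (c * y + d * y ^ 3) - (c * x + d * x ^ 3) - 2 * (c * ((y - x) / 2) + d * ((y - x) / 2) ^ 3)
      = 3 * d / 4 * (y - x) * (x + y) ^ 2 := by
  ring

theorem stmt_7_general (a b : ℝ) (hb : 0 < b) :
    ∀ x y : ℝ, x < y →
      deriv (fun z => -a * z ^ 2 + b * z ^ 4) y
          - deriv (fun z => -a * z ^ 2 + b * z ^ 4) x
        ≥ 2 * deriv (fun z => -a * z ^ 2 + b * z ^ 4) ((y - x) / 2) := by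
  intro x y hxy
  simp only [deriv_neg_mul_sq_add_mul_pow_four]
  have defect := linear_add_cubic_sub_sub_two_mul_half (-2 * a) (4 * b) x y
  have defect_nonneg : 0 ≤ 3 * (4 * b) / 4 * (y - x) * (x + y) ^ 2 := by
    have : 0 < y - x := sub_pos.mpr hxy
    positivity
  linarith

/-- The double-well potential `Ṽ(z) = −az² + bz⁴` with `a, b > 0`
satisfies `Ṽ'(y) − Ṽ'(x) ≥ 2Ṽ'((y−x)/2)` for all `x < y`; i.e. `Ṽ'` is a modulus of
convexity for `Ṽ`. -/
theorem stmt_7 (a b : ℝ) (ha : 0 < a) (hb : 0 < b) :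
    ∀ x y : ℝ, x < y →
      deriv (fun z => -a * z ^ 2 + b * z ^ 4) y
          - deriv (fun z => -a * z ^ 2 + b * z ^ 4) x
        ≥ 2 * deriv (fun z => -a * z ^ 2 + b * z ^ 4) ((y - x) / 2) :=
  stmt_7_general a b hb
end

section
/- Let ψ : [0, D/2) → ℝ solve the stationary equation ψ' + ψ² = Ṽ − μ with ψ(0) = 0, where Ṽ is continuous with −λ_−² ≤ Ṽ − μ ≤ λ_+² on [0, D/2). Then ψ(z) ≤ λ_+ tanh(λ_+ z) for all z in the interval of existence. -/
/-!
For `l > λ₊` the barrier `φ z = l tanh (l z)` solves `φ' = l² - φ²`, so wherever `ψ` touches it,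
`ψ' = Ṽ - μ - ψ² ≤ λ₊² - φ² < φ'`. The fencing theorem for strict barriers then keeps `ψ` below
every such barrier, and letting `l` decrease to `λ₊` gives the bound.
-/

open Set

theorem Real.hasDerivAt_tanh (x : ℝ) : HasDerivAt Real.tanh (1 - Real.tanh x ^ 2) x := by
  have htanh : Real.tanh = Real.sinh / Real.cosh := funext Real.tanh_eq_sinh_div_cosh
  have hcosh := (Real.cosh_pos x).ne'
  rw [htanh]
  refine ((Real.hasDerivAt_sinh x).div (Real.hasDerivAt_cosh x) hcosh).congr_deriv ?_
  rw [Pi.div_apply]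
  field_simp

@[fun_prop]
theorem Real.continuous_tanh : Continuous Real.tanh :=
  continuous_iff_continuousAt.2 fun x => (Real.hasDerivAt_tanh x).continuousAt

theorem hasDerivAt_mul_tanh_mul (l z : ℝ) :
    HasDerivAt (fun z => l * Real.tanh (l * z)) (l ^ 2 - (l * Real.tanh (l * z)) ^ 2) z := by
  have hlin : HasDerivAt (fun z => l * z) l z := by simpa using (hasDerivAt_id z).const_mul l
  exact (((Real.hasDerivAt_tanh (l * z)).comp z hlin).const_mul l).congr_deriv (by ring)

section Riccati

variable {ψ q : ℝ → ℝ} {b : ℝ}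

theorem le_mul_tanh_mul_of_riccati_of_lt {l : ℝ}
    (hψ : ∀ z ∈ Ico 0 b, HasDerivWithinAt ψ (q z - ψ z ^ 2) (Ico 0 b) z)
    (hq : ∀ z ∈ Ico 0 b, q z < l ^ 2) (hψ0 : ψ 0 ≤ 0) :
    ∀ z ∈ Ico 0 b, ψ z ≤ l * Real.tanh (l * z) := by
  intro z hz
  have hsub : Icc 0 z ⊆ Ico 0 b := Icc_subset_Ico_right hz.2
  refine image_le_of_deriv_right_lt_deriv_boundary (a := 0) (b := z)
    (fun x hx => (hψ x (hsub hx)).continuousWithinAt.mono hsub)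
    (fun x hx => (hψ x (hsub (Ico_subset_Icc_self hx))).mono_of_mem_nhdsWithin
      (Filter.mem_of_superset (Ico_mem_nhdsGE (hx.2.trans hz.2)) (Ico_subset_Ico_left hx.1)))
    (by simpa using hψ0) (hasDerivAt_mul_tanh_mul l) ?_ ⟨hz.1, le_rfl⟩
  intro x hx hx_eq
  have hqx := hq x (hsub (Ico_subset_Icc_self hx))
  rw [hx_eq]
  linarith

theorem le_mul_tanh_mul_of_riccati {lam : ℝ} (hlam : 0 ≤ lam)
    (hψ : ∀ z ∈ Ico 0 b, HasDerivWithinAt ψ (q z - ψ z ^ 2) (Ico 0 b) z)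
    (hq : ∀ z ∈ Ico 0 b, q z ≤ lam ^ 2) (hψ0 : ψ 0 ≤ 0) :
    ∀ z ∈ Ico 0 b, ψ z ≤ lam * Real.tanh (lam * z) := by
  intro z hz
  have hcont : Continuous fun l : ℝ => l * Real.tanh (l * z) := by fun_prop
  refine ge_of_tendsto (hcont.continuousWithinAt (s := Ioi lam) (x := lam)) ?_
  filter_upwards [self_mem_nhdsWithin] with l hl
  exact le_mul_tanh_mul_of_riccati_of_lt hψ
    (fun x hx => (hq x hx).trans_lt (pow_lt_pow_left₀ hl hlam two_ne_zero)) hψ0 z hz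

end Riccati

theorem stmt_18_general (D μ lamPlus : ℝ) (hlamPlus : 0 < lamPlus)
    (Vt : ℝ → ℝ)
    (hup : ∀ z ∈ Set.Ico (0 : ℝ) (D / 2), Vt z - μ ≤ lamPlus ^ 2)
    (ψ : ℝ → ℝ)
    (hψ : ∀ z ∈ Set.Ico (0 : ℝ) (D / 2),
      HasDerivWithinAt ψ (Vt z - μ - ψ z ^ 2) (Set.Ico 0 (D / 2)) z)
    (hψ0 : ψ 0 = 0) :
    ∀ z ∈ Set.Ico (0 : ℝ) (D / 2), ψ z ≤ lamPlus * Real.tanh (lamPlus * z) :=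
  le_mul_tanh_mul_of_riccati (q := fun z => Vt z - μ) hlamPlus.le hψ hup hψ0.le

/-- If `ψ` solves `ψ' + ψ² = Ṽ − μ` on `[0, D/2)` with `ψ(0) = 0`,
where `Ṽ` is continuous with `−λ₋² ≤ Ṽ − μ ≤ λ₊²`, then
`ψ(z) ≤ λ₊ tanh(λ₊ z)` on `[0, D/2)`. -/
theorem stmt_18 (D μ lamPlus lamMinus : ℝ) (hD : 0 < D) (hlamPlus : 0 < lamPlus)
    (Vt : ℝ → ℝ) (hVt : ContinuousOn Vt (Set.Ico 0 (D / 2)))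
    (hlow : ∀ z ∈ Set.Ico (0 : ℝ) (D / 2), -lamMinus ^ 2 ≤ Vt z - μ)
    (hup : ∀ z ∈ Set.Ico (0 : ℝ) (D / 2), Vt z - μ ≤ lamPlus ^ 2)
    (ψ : ℝ → ℝ)
    (hψ : ∀ z ∈ Set.Ico (0 : ℝ) (D / 2),
      HasDerivWithinAt ψ (Vt z - μ - ψ z ^ 2) (Set.Ico 0 (D / 2)) z)
    (hψ0 : ψ 0 = 0) :
    ∀ z ∈ Set.Ico (0 : ℝ) (D / 2), ψ z ≤ lamPlus * Real.tanh (lamPlus * z) :=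
  stmt_18_general D μ lamPlus hlamPlus Vt hup ψ hψ hψ0
end
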